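/- Let a_0,...,a_{n-1} ∈ 𝔻 and let φ_k be the Takenaka–Malmquist functions with Blaschke products B_k. Then ∑_{k=0}^{n-1} φ_k(z)·conj(φ_k'(0)) = z - (conj(B_n'(0)) + conj(B_n(0))·z)·B_n(z) for all z ∈ 𝔻. -/

import Mathlib

noncomputable def blaschke (a : ℕ → ℂ) (n : ℕ) (z : ℂ) : ℂ :=
  ∏ j ∈ Finset.range n, (z - a j) / (1 - z * (starRingEnd ℂ) (a j))

noncomputable def tm (a : ℕ → ℂ) (k : ℕ) (z : ℂ) : ℂ :=
  ((Real.sqrt (1 - (‖a k‖)^2) : ℝ) : ℂ) / (1 - z * (starRingEnd ℂ) (a k)) * blaschke a k z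

lemma blaschke_succ (a : ℕ → ℂ) (n : ℕ) (z : ℂ) :
    blaschke a (n+1) z = blaschke a n z * ((z - a n) / (1 - z * (starRingEnd ℂ) (a n))) :=
  Finset.prod_range_succ _ _

noncomputable def Dbl (a : ℕ → ℂ) : ℕ → ℂ
  | 0 => 0
  | n+1 => Dbl a n * (-a n) + blaschke a n 0 * (1 - a n * (starRingEnd ℂ) (a n))

lemma hasDerivAt_factor (a : ℂ) :
    HasDerivAt (fun z : ℂ => (z - a) / (1 - z * (starRingEnd ℂ) a))
      (1 - a * (starRingEnd ℂ) a) 0 := by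
  have h1 : HasDerivAt (fun z : ℂ => z - a) 1 0 := (hasDerivAt_id 0).sub_const _
  have h2 : HasDerivAt (fun z : ℂ => 1 - z * (starRingEnd ℂ) a) (-(starRingEnd ℂ) a) 0 := by
    simpa using ((hasDerivAt_id 0).mul_const ((starRingEnd ℂ) a)).const_sub 1
  have h := h1.div h2 (by simp)
  refine h.congr_deriv ?_
  simp

lemma hasDerivAt_blaschke (a : ℕ → ℂ) (n : ℕ) :
    HasDerivAt (blaschke a n) (Dbl a n) 0 := by
  induction n with
  | zero =>
    have h : blaschke a 0 = fun _ => 1 := by funext z; simp [blaschke]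
    rw [h]
    exact hasDerivAt_const 0 1
  | succ n ih =>
    have hf : blaschke a (n+1)
        = fun z => blaschke a n z * ((z - a n) / (1 - z * (starRingEnd ℂ) (a n))) :=
      funext fun z => blaschke_succ a n z
    rw [hf]
    have h := ih.mul (hasDerivAt_factor (a n))
    refine h.congr_deriv ?_
    show _ = Dbl a n * (-a n) + blaschke a n 0 * (1 - a n * (starRingEnd ℂ) (a n))
    simp

lemma hasDerivAt_tm (a : ℕ → ℂ) (k : ℕ) :
    HasDerivAt (tm a k)
      (((Real.sqrt (1 - (‖a k‖)^2) : ℝ) : ℂ) *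
        ((starRingEnd ℂ) (a k) * blaschke a k 0 + Dbl a k)) 0 := by
  set c : ℂ := ((Real.sqrt (1 - (‖a k‖)^2) : ℝ) : ℂ) with hc
  have h2 : HasDerivAt (fun z : ℂ => 1 - z * (starRingEnd ℂ) (a k)) (-(starRingEnd ℂ) (a k)) 0 := by
    simpa using ((hasDerivAt_id 0).mul_const ((starRingEnd ℂ) (a k))).const_sub 1
  have h1 : HasDerivAt (fun z : ℂ => c / (1 - z * (starRingEnd ℂ) (a k))) (c * (starRingEnd ℂ) (a k)) 0 := by
    have h := (hasDerivAt_const (0:ℂ) c).div h2 (by simp)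
    refine h.congr_deriv ?_
    simp
  have h := h1.mul (hasDerivAt_blaschke a k)
  refine h.congr_deriv ?_
  simp
  ring

theorem stmt_15 (n : ℕ) (a : ℕ → ℂ) (ha : ∀ j < n, ‖a j‖ < 1)
    (z : ℂ) (hz : ‖z‖ < 1) :
    ∑ k ∈ Finset.range n, tm a k z * (starRingEnd ℂ) (deriv (tm a k) 0)
      = z - ((starRingEnd ℂ) (deriv (blaschke a n) 0) +
          (starRingEnd ℂ) (blaschke a n 0) * z) * blaschke a n z := by
  induction n with
  | zero =>
    have h : blaschke a 0 = fun _ => 1 := by funext w; simp [blaschke]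
    rw [h, (hasDerivAt_const (0:ℂ) (1:ℂ)).deriv]
    simp
  | succ n ih =>
    have han : ‖a n‖ < 1 := ha n n.lt_succ_self
    have hd : (1 : ℂ) - z * (starRingEnd ℂ) (a n) ≠ 0 := by
      intro h
      have h1 : z * (starRingEnd ℂ) (a n) = 1 := by linear_combination -h
      have h2 : ‖z * (starRingEnd ℂ) (a n)‖ < 1 := by
        rw [norm_mul, Complex.norm_conj]
        nlinarith [norm_nonneg z, norm_nonneg (a n)]
      rw [h1] at h2
      simp at h2
    have hcc : ((Real.sqrt (1 - (‖a n‖)^2) : ℝ) : ℂ) *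
        ((Real.sqrt (1 - (‖a n‖)^2) : ℝ) : ℂ) = 1 - a n * (starRingEnd ℂ) (a n) := by
      rw [← Complex.ofReal_mul, Real.mul_self_sqrt (by nlinarith [norm_nonneg (a n)])]
      rw [Complex.mul_conj, Complex.normSq_eq_norm_sq]
      push_cast
      ring
    rw [Finset.sum_range_succ, ih (fun j hj => ha j (Nat.lt_succ_of_lt hj)),
      (hasDerivAt_tm a n).deriv, (hasDerivAt_blaschke a (n+1)).deriv,
      blaschke_succ a n z, blaschke_succ a n 0]
    rw [show Dbl a (n+1) = Dbl a n * (-a n) + blaschke a n 0 * (1 - a n * (starRingEnd ℂ) (a n)) from rfl]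
    rw [show deriv (blaschke a n) 0 = Dbl a n from (hasDerivAt_blaschke a n).deriv] at *
    unfold tm
    set c : ℂ := ((Real.sqrt (1 - (‖a n‖)^2) : ℝ) : ℂ) with hcdef
    set B := blaschke a n z
    set B0 := blaschke a n 0
    set Dn := Dbl a n
    set an := a n
    simp only [map_add, map_mul, map_sub, map_one, Complex.conj_conj, Complex.conj_ofReal, map_neg]
    rw [show (starRingEnd ℂ) c = c by rw [hcdef]; exact Complex.conj_ofReal _]
    simp only [zero_sub, zero_mul, mul_zero, sub_zero, div_one, map_neg]
    field_simp
    linear_combination (B * ((starRingEnd ℂ) Dn + an * (starRingEnd ℂ) B0)) * hcc
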